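/- Any two reduced (minimal-length) expressions for an element of the symmetric group Σ_n in the generators s_1,...,s_{n-1} can be transformed into each other using only the braid relations s_is_j = s_js_i for |i-j| > 1 and s_is_{i+1}s_i = s_{i+1}s_is_{i+1} (without using s_i^2 = 1). -/

import Mathlib

/-- The adjacent transposition `s_{i+1} = ((i+1), (i+2))` (0-based: swaps `i`
and `i+1`) in the symmetric group `Σ_n`. -/
def adjTrans (n : ℕ) (i : Fin (n - 1)) : Equiv.Perm (Fin n) :=
  Equiv.swap ⟨(i : ℕ), by have := i.isLt; omega⟩ ⟨(i : ℕ) + 1, by have := i.isLt; omega⟩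

/-- The word length of a permutation with respect to the adjacent
transpositions `s_1, …, s_{n-1}`. -/
noncomputable def permLength (n : ℕ) (x : Equiv.Perm (Fin n)) : ℕ :=
  sInf {k | ∃ l : List (Fin (n - 1)), l.length = k ∧ (l.map (adjTrans n)).prod = x}

/-- A single application of a braid relation (`s_i s_j = s_j s_i` for
`|i-j| > 1`, or `s_i s_{i+1} s_i = s_{i+1} s_i s_{i+1}`) inside a word in the
generators `s_1, …, s_m` (letters are 0-based indices in `Fin m`). -/
inductive BraidMove (m : ℕ) : List (Fin m) → List (Fin m) → Prop
  | comm (u v : List (Fin m)) (i j : Fin m) (h : (i : ℕ) + 1 < (j : ℕ)) :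
      BraidMove m (u ++ [i, j] ++ v) (u ++ [j, i] ++ v)
  | braid (u v : List (Fin m)) (i j : Fin m) (h : (i : ℕ) + 1 = (j : ℕ)) :
      BraidMove m (u ++ [i, j, i] ++ v) (u ++ [j, i, j] ++ v)

/-! The length of `x` is its number of inversions, and `s_i` can start a reduced word of `x`
exactly when `x⁻¹ (i + 1) < x⁻¹ i`. If two reduced words of `x` start with `s_i` and `s_j`,
both are such descents, and then `x` also has a reduced word starting with `s_i s_j`
(`|i - j| > 1`) or `s_i s_j s_i` (`|i - j| = 1`), which one braid move turns into a reduced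
word starting with `s_j`. Induction on the length, applied to the tails after the common first
letter, connects each given word with one of these two. -/

open Equiv Finset Relation

namespace Equiv.Perm

variable {α : Type*} [LinearOrder α]

theorem swap_apply_lt_swap_apply_iff {a b u v : α} (hab : a ⋖ b)
    (h : ¬(u = a ∧ v = b)) (h' : ¬(u = b ∧ v = a)) :
    swap a b u < swap a b v ↔ u < v := by
  have hlt := hab.lt
  have hb : ∀ {c}, a < c → c ≠ b → b < c := fun hc hcb => (hab.ge_of_gt hc).lt_of_ne' hcb
  have ha : ∀ {c}, c < b → c ≠ a → c < a := fun hc hca => (hab.le_of_lt hc).lt_of_ne hca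
  simp only [swap_apply_def]
  split_ifs <;> subst_vars <;> simp_all <;> constructor <;> intro hc <;>
    first | exact hlt.trans hc | exact hc.trans hlt | exact hb hc ‹_› | exact ha hc ‹_›

variable [Fintype α]

def inversions (x : Perm α) : Finset (α × α) :=
  {p | p.1 < p.2 ∧ x p.2 < x p.1}

@[simp] theorem mem_inversions {x : Perm α} {p q : α} :
    (p, q) ∈ x.inversions ↔ p < q ∧ x q < x p := by
  simp [inversions]

def numInversions (x : Perm α) : ℕ := #x.inversions

@[simp] theorem numInversions_one : numInversions (1 : Perm α) = 0 := by
  simp only [numInversions, inversions, card_eq_zero, filter_eq_empty_iff]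
  exact fun p _ h => lt_asymm h.1 h.2

theorem inversions_swap_mul {a b : α} {x : Perm α} (hab : a ⋖ b) (hx : x⁻¹ a < x⁻¹ b) :
    (swap a b * x).inversions = insert (x⁻¹ a, x⁻¹ b) x.inversions := by
  ext ⟨p, q⟩
  simp only [mem_insert, mem_inversions, mul_apply, Prod.mk.injEq, eq_inv_iff_eq]
  by_cases hpq : x p = a ∧ x q = b
  · obtain ⟨rfl, rfl⟩ := hpq
    simpa [hab.lt] using hx
  by_cases hqp : x p = b ∧ x q = a
  · obtain ⟨rfl, rfl⟩ := hqp
    simp only [coe_inv, symm_apply_apply] at hx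
    simp [hx.not_gt, hx.ne]
  rw [swap_apply_lt_swap_apply_iff hab (by tauto) (by tauto)]
  tauto

theorem numInversions_swap_mul_of_lt {a b : α} {x : Perm α} (hab : a ⋖ b)
    (hx : x⁻¹ a < x⁻¹ b) : numInversions (swap a b * x) = numInversions x + 1 := by
  rw [numInversions, inversions_swap_mul hab hx, card_insert_of_notMem]
  · rfl
  · simp [hab.lt.le]

theorem numInversions_swap_mul_of_gt {a b : α} {x : Perm α} (hab : a ⋖ b)
    (hx : x⁻¹ b < x⁻¹ a) : numInversions (swap a b * x) + 1 = numInversions x := by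
  have := numInversions_swap_mul_of_lt hab (x := swap a b * x) (by simpa using hx)
  rwa [swap_mul_self_mul, eq_comm] at this

theorem eq_one_of_forall_covBy [LocallyFiniteOrder α] {x : Perm α}
    (hx : ∀ a b : α, a ⋖ b → x a < x b) : x = 1 := by
  have hmono : StrictMono x := (strictMono_iff_forall_covBy x).mpr hx
  ext a
  exact congrArg (· a) (Subsingleton.elim (hmono.orderIsoOfSurjective x x.surjective) (.refl α))

end Equiv.Perm

open Equiv.Perm

section

variable {n : ℕ}

def adjLeft (n : ℕ) (i : Fin (n - 1)) : Fin n := ⟨i, by have := i.isLt; omega⟩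

def adjRight (n : ℕ) (i : Fin (n - 1)) : Fin n := ⟨i + 1, by have := i.isLt; omega⟩

@[simp] theorem val_adjLeft (i : Fin (n - 1)) : (adjLeft n i : ℕ) = i := rfl

@[simp] theorem val_adjRight (i : Fin (n - 1)) : (adjRight n i : ℕ) = i + 1 := rfl

theorem adjTrans_eq_swap (i : Fin (n - 1)) : adjTrans n i = swap (adjLeft n i) (adjRight n i) :=
  rfl

@[simp] theorem adjTrans_inv (i : Fin (n - 1)) : (adjTrans n i)⁻¹ = adjTrans n i :=
  swap_inv _ _

theorem adjTrans_apply_adjLeft (i : Fin (n - 1)) : adjTrans n i (adjLeft n i) = adjRight n i :=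
  swap_apply_left _ _

theorem adjTrans_apply_adjRight (i : Fin (n - 1)) : adjTrans n i (adjRight n i) = adjLeft n i :=
  swap_apply_right _ _

theorem adjTrans_apply_of_ne {i : Fin (n - 1)} {p : Fin n} (h : (p : ℕ) ≠ i)
    (h' : (p : ℕ) ≠ i + 1) : adjTrans n i p = p :=
  swap_apply_of_ne_of_ne (fun hp => h (by simp [hp])) (fun hp => h' (by simp [hp]))

theorem adjLeft_covBy_adjRight (i : Fin (n - 1)) : adjLeft n i ⋖ adjRight n i := by
  simp

theorem exists_adjLeft_eq_of_covBy {a b : Fin n} (hab : a ⋖ b) :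
    ∃ i : Fin (n - 1), adjLeft n i = a ∧ adjRight n i = b := by
  simp only [Fin.covBy_iff, Nat.covBy_iff_add_one_eq] at hab
  exact ⟨⟨a, by omega⟩, rfl, Fin.ext hab⟩

theorem adjTrans_mul_comm {i j : Fin (n - 1)} (h : (i : ℕ) + 1 < j) :
    adjTrans n i * adjTrans n j = adjTrans n j * adjTrans n i :=
  (disjoint_swap_swap (by simp [Fin.ext_iff]; omega)).commute.eq

theorem adjTrans_braid {i j : Fin (n - 1)} (h : (i : ℕ) + 1 = j) :
    adjTrans n i * adjTrans n j * adjTrans n i = adjTrans n j * adjTrans n i * adjTrans n j := by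
  have hj : adjLeft n j = adjRight n i := Fin.ext (by simp [h])
  have hpq : adjLeft n i ≠ adjRight n i := (adjLeft_covBy_adjRight i).ne
  have hpr : adjLeft n i ≠ adjRight n j := by simp [Fin.ext_iff]; omega
  have hqr : adjRight n i ≠ adjRight n j := by simp [Fin.ext_iff]; omega
  rw [adjTrans_eq_swap, adjTrans_eq_swap j, hj, swap_mul_swap_mul_swap hpq hpr,
    swap_comm (adjLeft n i), swap_comm (adjRight n i) (adjRight n j),
    swap_mul_swap_mul_swap hqr.symm hpr.symm, swap_comm]

/-- The combinatorial form of `ℓ(s_i x) < ℓ(x)`, see `numInversions_adjTrans_mul_add_one`. -/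
def IsLeftDescent (x : Perm (Fin n)) (i : Fin (n - 1)) : Prop :=
  x⁻¹ (adjRight n i) < x⁻¹ (adjLeft n i)

theorem numInversions_adjTrans_mul_add_one {x : Perm (Fin n)} {i : Fin (n - 1)}
    (h : IsLeftDescent x i) : numInversions (adjTrans n i * x) + 1 = numInversions x :=
  numInversions_swap_mul_of_gt (adjLeft_covBy_adjRight i) h

theorem numInversions_adjTrans_mul_of_not_isLeftDescent {x : Perm (Fin n)} {i : Fin (n - 1)}
    (h : ¬IsLeftDescent x i) : numInversions (adjTrans n i * x) = numInversions x + 1 :=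
  numInversions_swap_mul_of_lt (adjLeft_covBy_adjRight i) <|
    (not_lt.mp h).lt_of_ne (x⁻¹.injective.ne (adjLeft_covBy_adjRight i).lt.ne)

theorem numInversions_adjTrans_mul_le (x : Perm (Fin n)) (i : Fin (n - 1)) :
    numInversions (adjTrans n i * x) ≤ numInversions x + 1 := by
  by_cases h : IsLeftDescent x i
  · have := numInversions_adjTrans_mul_add_one h
    omega
  · exact (numInversions_adjTrans_mul_of_not_isLeftDescent h).le

theorem exists_isLeftDescent_of_ne_one {x : Perm (Fin n)} (hx : x ≠ 1) :
    ∃ i, IsLeftDescent x i := by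
  by_contra! h
  refine hx (inv_eq_one.mp (eq_one_of_forall_covBy fun a b hab => ?_))
  obtain ⟨i, rfl, rfl⟩ := exists_adjLeft_eq_of_covBy hab
  exact (not_lt.mp (h i)).lt_of_ne (x⁻¹.injective.ne hab.lt.ne)

def wordProd (n : ℕ) (w : List (Fin (n - 1))) : Perm (Fin n) := (w.map (adjTrans n)).prod

@[simp] theorem wordProd_nil : wordProd n [] = 1 := rfl

@[simp] theorem wordProd_cons (i : Fin (n - 1)) (w : List (Fin (n - 1))) :
    wordProd n (i :: w) = adjTrans n i * wordProd n w := List.prod_cons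

@[simp] theorem wordProd_append (u v : List (Fin (n - 1))) :
    wordProd n (u ++ v) = wordProd n u * wordProd n v := by
  simp [wordProd]

theorem numInversions_wordProd_le (w : List (Fin (n - 1))) :
    numInversions (wordProd n w) ≤ w.length := by
  induction w with
  | nil => simp
  | cons i w ih =>
    have := numInversions_adjTrans_mul_le (wordProd n w) i
    simp only [wordProd_cons, List.length_cons]
    omega

def IsReducedWord (x : Perm (Fin n)) (w : List (Fin (n - 1))) : Prop :=
  wordProd n w = x ∧ w.length = numInversions x

theorem isReducedWord_cons_iff {x : Perm (Fin n)} {i : Fin (n - 1)} {w : List (Fin (n - 1))} :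
    IsReducedWord x (i :: w) ↔ IsLeftDescent x i ∧ IsReducedWord (adjTrans n i * x) w := by
  have hprod : wordProd n (i :: w) = x ↔ wordProd n w = adjTrans n i * x := by
    rw [wordProd_cons]
    constructor
    · rintro rfl
      exact (swap_mul_self_mul _ _ _).symm
    · rintro hw
      rw [hw]
      exact swap_mul_self_mul _ _ _
  simp only [IsReducedWord, hprod, List.length_cons]
  constructor
  · rintro ⟨hw, hlen⟩
    have hle := numInversions_wordProd_le (n := n) w
    rw [hw] at hle
    by_cases hi : IsLeftDescent x i
    · have := numInversions_adjTrans_mul_add_one hi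
      exact ⟨hi, hw, by omega⟩
    · have := numInversions_adjTrans_mul_of_not_isLeftDescent hi
      omega
  · rintro ⟨hi, hw, hlen⟩
    have := numInversions_adjTrans_mul_add_one hi
    exact ⟨hw, by omega⟩

theorem exists_isReducedWord (x : Perm (Fin n)) : ∃ w, IsReducedWord x w := by
  induction hk : numInversions x using Nat.strong_induction_on generalizing x with
  | _ k ih =>
  obtain rfl | hx := eq_or_ne x 1
  · exact ⟨[], rfl, by simp⟩
  obtain ⟨i, hi⟩ := exists_isLeftDescent_of_ne_one hx
  have hlt := numInversions_adjTrans_mul_add_one hi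
  obtain ⟨w, hw⟩ := ih _ (by omega) (adjTrans n i * x) rfl
  exact ⟨i :: w, isReducedWord_cons_iff.mpr ⟨hi, hw⟩⟩

theorem permLength_eq_numInversions (x : Perm (Fin n)) : permLength n x = numInversions x := by
  obtain ⟨w, hw, hlen⟩ := exists_isReducedWord x
  refine le_antisymm (Nat.sInf_le ⟨w, hlen, hw⟩) ?_
  have hne : {k | ∃ v : List (Fin (n - 1)), v.length = k ∧ wordProd n v = x}.Nonempty :=
    ⟨_, w, hlen, hw⟩
  obtain ⟨v, hv, rfl⟩ := Nat.sInf_mem hne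
  exact (numInversions_wordProd_le v).trans_eq hv

theorem BraidMove.cons {m : ℕ} {u v : List (Fin m)} (c : Fin m) (h : BraidMove m u v) :
    BraidMove m (c :: u) (c :: v) := by
  cases h with
  | comm u v i j hij => exact .comm (c :: u) v i j hij
  | braid u v i j hij => exact .braid (c :: u) v i j hij

theorem eqvGen_braidMove_cons {m : ℕ} {u v : List (Fin m)} (c : Fin m)
    (h : EqvGen (BraidMove m) u v) :
    EqvGen (BraidMove m) (c :: u) (c :: v) := by
  induction h with
  | rel _ _ h => exact .rel _ _ (h.cons c)
  | refl => exact .refl _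
  | symm _ _ _ ih => exact ih.symm
  | trans _ _ _ _ _ ih₁ ih₂ => exact ih₁.trans _ _ _ ih₂

theorem BraidMove.length_eq {m : ℕ} {w w' : List (Fin m)} (h : BraidMove m w w') :
    w.length = w'.length := by
  cases h <;> simp

theorem BraidMove.wordProd_eq {w w' : List (Fin (n - 1))} (h : BraidMove (n - 1) w w') :
    wordProd n w = wordProd n w' := by
  cases h with
  | comm u v i j hij =>
    simp only [wordProd_append, wordProd_cons, wordProd_nil, mul_one, adjTrans_mul_comm hij]
  | braid u v i j hij =>
    simp only [wordProd_append, wordProd_cons, wordProd_nil, mul_one]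
    congr 2
    simpa only [mul_assoc] using adjTrans_braid hij

theorem IsReducedWord.of_braidMove {x : Perm (Fin n)} {w w' : List (Fin (n - 1))}
    (h : IsReducedWord x w) (hm : BraidMove (n - 1) w w') : IsReducedWord x w' :=
  ⟨hm.wordProd_eq ▸ h.1, hm.length_eq ▸ h.2⟩

theorem exists_isReducedWord_of_commute {x : Perm (Fin n)} {i j : Fin (n - 1)}
    (hij : (i : ℕ) + 1 < j) (hi : IsLeftDescent x i) (hj : IsLeftDescent x j) :
    ∃ u, IsReducedWord x (i :: j :: u) := by
  have hj' : IsLeftDescent (adjTrans n i * x) j := by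
    simp only [IsLeftDescent, mul_inv_rev, adjTrans_inv, mul_apply]
    rwa [adjTrans_apply_of_ne (by simp; omega) (by simp; omega),
      adjTrans_apply_of_ne (by simp; omega) (by simp; omega)]
  obtain ⟨u, hu⟩ := exists_isReducedWord (adjTrans n j * (adjTrans n i * x))
  exact ⟨u, isReducedWord_cons_iff.mpr ⟨hi, isReducedWord_cons_iff.mpr ⟨hj', hu⟩⟩⟩

theorem exists_isReducedWord_of_braid {x : Perm (Fin n)} {i j : Fin (n - 1)}
    (hij : (i : ℕ) + 1 = j) (hi : IsLeftDescent x i) (hj : IsLeftDescent x j) :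
    ∃ u, IsReducedWord x (i :: j :: i :: u) := by
  have hmid : adjLeft n j = adjRight n i := Fin.ext (by simp [hij])
  have hfix_i : adjTrans n i (adjRight n j) = adjRight n j :=
    adjTrans_apply_of_ne (by simp; omega) (by simp; omega)
  have hfix_j : adjTrans n j (adjLeft n i) = adjLeft n i :=
    adjTrans_apply_of_ne (by simp; omega) (by simp; omega)
  rw [IsLeftDescent, hmid] at hj
  have hj' : IsLeftDescent (adjTrans n i * x) j := by
    simp only [IsLeftDescent, mul_inv_rev, adjTrans_inv, mul_apply]
    rw [hfix_i, hmid, adjTrans_apply_adjRight]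
    exact hj.trans hi
  have hi' : IsLeftDescent (adjTrans n j * (adjTrans n i * x)) i := by
    simp only [IsLeftDescent, mul_inv_rev, adjTrans_inv, mul_apply]
    rw [← hmid, adjTrans_apply_adjLeft, hfix_i, hfix_j, adjTrans_apply_adjLeft]
    exact hj
  obtain ⟨u, hu⟩ := exists_isReducedWord (adjTrans n i * (adjTrans n j * (adjTrans n i * x)))
  exact ⟨u, isReducedWord_cons_iff.mpr ⟨hi, isReducedWord_cons_iff.mpr
    ⟨hj', isReducedWord_cons_iff.mpr ⟨hi', hu⟩⟩⟩⟩

theorem exists_isReducedWord_cons_eqvGen {x : Perm (Fin n)} {i j : Fin (n - 1)}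
    (hi : IsLeftDescent x i) (hj : IsLeftDescent x j) :
    ∃ r₁ r₂, IsReducedWord x (i :: r₁) ∧ IsReducedWord x (j :: r₂) ∧
      EqvGen (BraidMove (n - 1)) (i :: r₁) (j :: r₂) := by
  wlog hij : (i : ℕ) ≤ j generalizing i j
  · obtain ⟨r₂, r₁, h₂, h₁, h⟩ := this hj hi (by omega)
    exact ⟨r₁, r₂, h₁, h₂, h.symm⟩
  obtain hij | hij | hij : (i : ℕ) = j ∨ (i : ℕ) + 1 = j ∨ (i : ℕ) + 1 < j := by omega
  · obtain rfl := Fin.ext hij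
    obtain ⟨r, hr⟩ := exists_isReducedWord (adjTrans n i * x)
    have h := isReducedWord_cons_iff.mpr ⟨hi, hr⟩
    exact ⟨r, r, h, h, .refl _⟩
  · obtain ⟨u, hu⟩ := exists_isReducedWord_of_braid hij hi hj
    have hm := BraidMove.braid [] u i j hij
    exact ⟨_, _, hu, hu.of_braidMove hm, .rel _ _ hm⟩
  · obtain ⟨u, hu⟩ := exists_isReducedWord_of_commute hij hi hj
    have hm := BraidMove.comm [] u i j hij
    exact ⟨_, _, hu, hu.of_braidMove hm, .rel _ _ hm⟩

theorem IsReducedWord.eqvGen_braidMove {x : Perm (Fin n)} {w₁ w₂ : List (Fin (n - 1))}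
    (h₁ : IsReducedWord x w₁) (h₂ : IsReducedWord x w₂) :
    EqvGen (BraidMove (n - 1)) w₁ w₂ := by
  induction hk : numInversions x using Nat.strong_induction_on generalizing x w₁ w₂ with
  | _ k ih =>
  match w₁, w₂, h₁, h₂ with
  | [], [], _, _ => exact .refl _
  | [], _ :: _, h₁, h₂ | _ :: _, [], h₁, h₂ =>
    exact absurd (h₁.2.trans h₂.2.symm) (by simp)
  | _ :: _, _ :: _, h₁, h₂ =>
    have same_head {l : Fin (n - 1)} {t r : List (Fin (n - 1))}
        (ht : IsReducedWord x (l :: t)) (hr : IsReducedWord x (l :: r)) :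
        EqvGen (BraidMove (n - 1)) (l :: t) (l :: r) := by
      rw [isReducedWord_cons_iff] at ht hr
      have := numInversions_adjTrans_mul_add_one ht.1
      exact eqvGen_braidMove_cons l (ih _ (by omega) ht.2 hr.2 rfl)
    obtain ⟨r₁, r₂, hr₁, hr₂, hr⟩ := exists_isReducedWord_cons_eqvGen
      (isReducedWord_cons_iff.mp h₁).1 (isReducedWord_cons_iff.mp h₂).1
    exact (same_head h₁ hr₁).trans _ _ _ (hr.trans _ _ _ (same_head h₂ hr₂).symm)

end

/-- **Matsumoto's lemma for `Σ_n`.** Any two reduced expressions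
for the same element of the symmetric group in the adjacent transpositions can
be transformed into each other using only the braid relations (without using
`s_i² = 1`). -/
theorem reduced_words_braid_equivalent (n : ℕ) (x : Equiv.Perm (Fin n))
    (w₁ w₂ : List (Fin (n - 1)))
    (h₁ : (w₁.map (adjTrans n)).prod = x) (h₂ : (w₂.map (adjTrans n)).prod = x)
    (hl₁ : w₁.length = permLength n x) (hl₂ : w₂.length = permLength n x) :
    Relation.EqvGen (BraidMove (n - 1)) w₁ w₂ := by
  rw [permLength_eq_numInversions] at hl₁ hl₂
  exact IsReducedWord.eqvGen_braidMove ⟨h₁, hl₁⟩ ⟨h₂, hl₂⟩
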